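/- (Rule of Connected Components) Let A and B be the z-matrix and w-matrix of a singular sequence and C = A + B. If I is a connected component of A, then: (i) Σ_{i∈I} a_{ii} ≠ 1; and (ii) if a_{ii} = 1 for all i ∈ I, then there exist distinct i, j ∈ I with c_{ij} ≠ 2. Likewise, if I is a connected component of B, then Σ_{i∈I} b_{ii} ≠ 1, and if b_{ii} = 1 for all i ∈ I, then there exist distinct i, j ∈ I with c_{ij} ≠ 2. -/

import Mathlib

open Filter Finset

/-- `Zq δ z k l` is the quantity `Z_{lk} = δ_{kl}^3 · (z_k − z_l)`
(and, applied to `w`, the quantity `W_{lk}`). -/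
noncomputable def Zq {n : ℕ} (δ : Fin n → Fin n → ℂ) (z : Fin n → ℂ) (k l : Fin n) : ℂ :=
  δ k l ^ 3 * (z k - z l)

/-- A singular sequence of normalized central configurations for the masses `m`:
sequences `z^{(N)}, w^{(N)} ∈ ℂ^n`, symmetric `δ^{(N)}`, and positive reals `ε_N → 0`
such that every term satisfies the central configuration equations
`z_k = ∑_{l≠k} m_l Z_{lk}`, `w_k = ∑_{l≠k} m_l W_{lk}`, the normalization
`δ_{kl}^2 z_{kl} w_{kl} = 1` (`k ≠ l`), the maximum of the `|z_k|, |Z_{kl}|`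
(resp. `|w_k|, |W_{kl}|`) equals `ε_N^{-2}`, and all the sequences
`ε_N^2 z_k, ε_N^2 w_k, ε_N^2 Z_{kl}, ε_N^2 W_{kl}` converge. -/
structure SingularSeq (n : ℕ) (m : Fin n → ℂ) : Type where
  z : ℕ → Fin n → ℂ
  w : ℕ → Fin n → ℂ
  delta : ℕ → Fin n → Fin n → ℂ
  eps : ℕ → ℝ
  eps_pos : ∀ N, 0 < eps N
  eps_lim : Tendsto eps atTop (nhds 0)
  delta_symm : ∀ N, ∀ k l : Fin n, delta N k l = delta N l k
  eq_z : ∀ N, ∀ k : Fin n, z N k = ∑ l ∈ univ.erase k, m l * Zq (delta N) (z N) k l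
  eq_w : ∀ N, ∀ k : Fin n, w N k = ∑ l ∈ univ.erase k, m l * Zq (delta N) (w N) k l
  normalize : ∀ N, ∀ k l : Fin n, k ≠ l →
    delta N k l ^ 2 * (z N l - z N k) * (w N l - w N k) = 1
  maxZ : ∀ N, IsGreatest
      ({x : ℝ | ∃ k, x = ‖z N k‖} ∪
        {x : ℝ | ∃ k l, k ≠ l ∧ x = ‖Zq (delta N) (z N) k l‖})
      (eps N ^ (-2 : ℤ))
  maxW : ∀ N, IsGreatest
      ({x : ℝ | ∃ k, x = ‖w N k‖} ∪
        {x : ℝ | ∃ k l, k ≠ l ∧ x = ‖Zq (delta N) (w N) k l‖})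
      (eps N ^ (-2 : ℤ))
  conv_z : ∀ k : Fin n, ∃ L : ℂ,
    Tendsto (fun N => (eps N : ℂ) ^ 2 * z N k) atTop (nhds L)
  conv_w : ∀ k : Fin n, ∃ L : ℂ,
    Tendsto (fun N => (eps N : ℂ) ^ 2 * w N k) atTop (nhds L)
  conv_Z : ∀ k l : Fin n, k ≠ l → ∃ L : ℂ,
    Tendsto (fun N => (eps N : ℂ) ^ 2 * Zq (delta N) (z N) k l) atTop (nhds L)
  conv_W : ∀ k l : Fin n, k ≠ l → ∃ L : ℂ,
    Tendsto (fun N => (eps N : ℂ) ^ 2 * Zq (delta N) (w N) k l) atTop (nhds L)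

/-- `A` and `B` are the z-matrix and the w-matrix of the singular sequence `S`:
symmetric `{0,1}`-matrices whose entries record which of the (convergent) sequences
`ε_N^2 z_i`, `ε_N^2 Z_{ij}` (resp. `ε_N^2 w_i`, `ε_N^2 W_{ij}`) have nonzero limit. -/
structure IsZWMatrices {n : ℕ} {m : Fin n → ℂ} (S : SingularSeq n m)
    (A B : Matrix (Fin n) (Fin n) ℕ) : Prop where
  zeroOne_A : ∀ i j, A i j = 0 ∨ A i j = 1
  symm_A : ∀ i j, A i j = A j i
  zeroOne_B : ∀ i j, B i j = 0 ∨ B i j = 1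
  symm_B : ∀ i j, B i j = B j i
  diag_A : ∀ i, A i i = 1 ↔
    ¬ Tendsto (fun N => (S.eps N : ℂ) ^ 2 * S.z N i) atTop (nhds 0)
  off_A : ∀ i j, i ≠ j → (A i j = 1 ↔
    ¬ Tendsto (fun N => (S.eps N : ℂ) ^ 2 * Zq (S.delta N) (S.z N) i j) atTop (nhds 0))
  diag_B : ∀ i, B i i = 1 ↔
    ¬ Tendsto (fun N => (S.eps N : ℂ) ^ 2 * S.w N i) atTop (nhds 0)
  off_B : ∀ i j, i ≠ j → (B i j = 1 ↔
    ¬ Tendsto (fun N => (S.eps N : ℂ) ^ 2 * Zq (S.delta N) (S.w N) i j) atTop (nhds 0))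

/-- The stroke graph of a matrix: an edge between `i` and `j` (`i ≠ j`) iff the
corresponding entry equals `1` (the matrices in question are symmetric). -/
def strokeGraph {n : ℕ} (A : Matrix (Fin n) (Fin n) ℕ) : SimpleGraph (Fin n) where
  Adj i j := i ≠ j ∧ A i j = 1 ∧ A j i = 1
  symm := ⟨fun _ _ h => ⟨h.1.symm, h.2.2, h.2.1⟩⟩
  loopless := ⟨fun _ h => h.1 rfl⟩

/-- `I` is (the vertex set of) a connected component of the stroke graph of `A`. -/
def IsComponent {n : ℕ} (A : Matrix (Fin n) (Fin n) ℕ) (I : Finset (Fin n)) : Prop :=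
  ∃ v : Fin n, ∀ u : Fin n, u ∈ I ↔ (strokeGraph A).Reachable u v

/-!
Write `ζ_k = lim ε² z_k`. Summing `m_k z_k = ∑_l m_k m_l Z_{lk}` over a component `I` of `A`,
the terms with both indices in `I` cancel by antisymmetry, and the remaining strokes leave `I`,
so their rescaled limits vanish: `∑_{k∈I} m_k ζ_k = 0`. If exactly one `ζ_k` with `k ∈ I` is
nonzero, this contradicts `m_k ≠ 0`. If `c_{kl} = 2` for all distinct `k, l ∈ I`, then
`ζ_k = ζ_l`: passing to the limit in `ε⁴ z_{kl} W_{lk} = ε⁴ w_{kl} Z_{lk}` and in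
`ε¹² Z_{lk} W_{lk} z_{kl}² w_{kl}² = ε¹²` (the normalization, cubed) leaves no other possibility
when both stroke limits are nonzero. Then `(∑_{k∈I} m_k) ζ = 0` with `ζ ≠ 0`, contradicting the
mass condition. The statement for `B` follows by exchanging `z` and `w`.
-/

open Topology

lemma Finset.sum_sum_eq_zero_of_antisymm {ι M : Type*} [AddCommMonoid M] (s : Finset ι)
    (g : ι → ι → M) (hg : ∀ k l, g k l + g l k = 0) (hdiag : ∀ k, g k k = 0) :
    ∑ k ∈ s, ∑ l ∈ s, g k l = 0 := by
  rw [← Finset.sum_product']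
  refine Finset.sum_involution (fun p _ => p.swap) (fun p _ => hg p.1 p.2)
    (fun ⟨k, l⟩ _ hkl hswap => hkl ?_) (fun p hp => Finset.mem_product.2 ?_)
    (fun p _ => p.swap_swap)
  · obtain rfl : l = k := congrArg Prod.fst hswap
    exact hdiag l
  · exact (Finset.mem_product.1 hp).symm

section Zq

variable {n : ℕ} (δ : Fin n → Fin n → ℂ) (z w : Fin n → ℂ)

@[simp]
lemma Zq_self (k : Fin n) : Zq δ z k k = 0 := by
  simp [Zq]

lemma Zq_swap (hδ : ∀ k l, δ k l = δ l k) (k l : Fin n) : Zq δ z l k = -Zq δ z k l := by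
  simp only [Zq, hδ l k]
  ring

lemma Zq_mul_Zq_mul_sq_mul_sq {k l : Fin n}
    (h : δ k l ^ 2 * (z l - z k) * (w l - w k) = 1) :
    Zq δ z k l * Zq δ w k l * (z k - z l) ^ 2 * (w k - w l) ^ 2 = 1 := by
  calc _ = (δ k l ^ 2 * (z l - z k) * (w l - w k)) ^ 3 := by unfold Zq; ring
    _ = 1 := by rw [h, one_pow]

lemma sum_mul_eq_sum_sum_compl_mul_Zq (m : Fin n → ℂ) (hδ : ∀ k l, δ k l = δ l k)
    (hz : ∀ k, z k = ∑ l ∈ univ.erase k, m l * Zq δ z k l) (I : Finset (Fin n)) :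
    ∑ k ∈ I, m k * z k = ∑ k ∈ I, ∑ l ∈ Iᶜ, m k * m l * Zq δ z k l := by
  have hrow : ∀ k, m k * z k = ∑ l, m k * m l * Zq δ z k l := fun k => by
    rw [← Finset.sum_erase _ (a := k) (by simp), hz k, Finset.mul_sum]
    simp only [mul_assoc]
  have hinner : ∑ k ∈ I, ∑ l ∈ I, m k * m l * Zq δ z k l = 0 :=
    Finset.sum_sum_eq_zero_of_antisymm I _
      (fun k l => by rw [Zq_swap δ z hδ]; ring) (fun k => by simp)
  simp only [hrow, ← Finset.sum_add_sum_compl I, Finset.sum_add_distrib, hinner, zero_add]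

end Zq

lemma IsComponent.apply_eq_zero_of_mem_of_notMem {n : ℕ} {A : Matrix (Fin n) (Fin n) ℕ}
    {I : Finset (Fin n)} (h01 : ∀ i j, A i j = 0 ∨ A i j = 1) (hsymm : ∀ i j, A i j = A j i)
    (hI : IsComponent A I) {k l : Fin n} (hk : k ∈ I) (hl : l ∉ I) : A k l = 0 := by
  refine (h01 k l).resolve_right fun h1 => ?_
  obtain ⟨v, hv⟩ := hI
  have hadj : (strokeGraph A).Adj l k := ⟨by rintro rfl; exact hl hk, hsymm l k ▸ h1, h1⟩
  exact hl ((hv l).2 (hadj.reachable.trans ((hv k).1 hk)))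

namespace SingularSeq

variable {n : ℕ} {m : Fin n → ℂ} (S : SingularSeq n m)

noncomputable def zLim (k : Fin n) : ℂ :=
  limUnder atTop fun N => (S.eps N : ℂ) ^ 2 * S.z N k

noncomputable def ZLim (k l : Fin n) : ℂ :=
  limUnder atTop fun N => (S.eps N : ℂ) ^ 2 * Zq (S.delta N) (S.z N) k l

lemma tendsto_zLim (k : Fin n) :
    Tendsto (fun N => (S.eps N : ℂ) ^ 2 * S.z N k) atTop (𝓝 (S.zLim k)) :=
  tendsto_nhds_limUnder (S.conv_z k)

lemma tendsto_ZLim {k l : Fin n} (hkl : k ≠ l) :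
    Tendsto (fun N => (S.eps N : ℂ) ^ 2 * Zq (S.delta N) (S.z N) k l) atTop (𝓝 (S.ZLim k l)) :=
  tendsto_nhds_limUnder (S.conv_Z k l hkl)

/-- Exchanging `z` and `w`; the limits on the `w`-side are `S.swap.zLim` and `S.swap.ZLim`. -/
noncomputable def swap : SingularSeq n m where
  z := S.w
  w := S.z
  delta := S.delta
  eps := S.eps
  eps_pos := S.eps_pos
  eps_lim := S.eps_lim
  delta_symm := S.delta_symm
  eq_z := S.eq_w
  eq_w := S.eq_z
  normalize := fun N k l h => by linear_combination S.normalize N k l h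
  maxZ := S.maxW
  maxW := S.maxZ
  conv_z := S.conv_w
  conv_w := S.conv_z
  conv_Z := S.conv_W
  conv_W := S.conv_Z

lemma tendsto_eps_sq_pow (j : ℕ) (hj : j ≠ 0) :
    Tendsto (fun N => ((S.eps N : ℂ) ^ 2) ^ j) atTop (𝓝 0) := by
  have hε := ((Complex.continuous_ofReal.tendsto 0).comp S.eps_lim).pow (2 * j)
  simpa [Function.comp_def, ← pow_mul, hj] using hε

lemma zLim_eq_of_ZLim_ne_zero {k l : Fin n} (hkl : k ≠ l) (hZ : S.ZLim k l ≠ 0)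
    (hW : S.swap.ZLim k l ≠ 0) : S.zLim k = S.zLim l := by
  have hdz : Tendsto (fun N => (S.eps N : ℂ) ^ 2 * (S.z N k - S.z N l)) atTop
      (𝓝 (S.zLim k - S.zLim l)) := by
    simpa only [mul_sub] using (S.tendsto_zLim k).sub (S.tendsto_zLim l)
  have hdw : Tendsto (fun N => (S.eps N : ℂ) ^ 2 * (S.w N k - S.w N l)) atTop
      (𝓝 (S.swap.zLim k - S.swap.zLim l)) :=
    ((S.swap.tendsto_zLim k).sub (S.swap.tendsto_zLim l)).congr fun N => (mul_sub ..).symm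
  have hcross : (S.zLim k - S.zLim l) * S.swap.ZLim k l
      = (S.swap.zLim k - S.swap.zLim l) * S.ZLim k l := by
    refine tendsto_nhds_unique (hdz.mul (S.swap.tendsto_ZLim hkl)) ?_
    refine (hdw.mul (S.tendsto_ZLim hkl)).congr fun N => ?_
    simp only [swap, Zq]
    ring
  have hprod : S.ZLim k l * S.swap.ZLim k l * (S.zLim k - S.zLim l) ^ 2
      * (S.swap.zLim k - S.swap.zLim l) ^ 2 = 0 := by
    refine tendsto_nhds_unique
      ((((S.tendsto_ZLim hkl).mul (S.swap.tendsto_ZLim hkl)).mul (hdz.pow 2)).mul (hdw.pow 2))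
      ((S.tendsto_eps_sq_pow 6 (by norm_num)).congr fun N => ?_)
    simp only [swap]
    linear_combination (-((S.eps N : ℂ) ^ 2) ^ 6) *
      Zq_mul_Zq_mul_sq_mul_sq (S.delta N) (S.z N) (S.w N) (S.normalize N k l hkl)
  by_contra hne
  have hω : S.swap.zLim k - S.swap.zLim l = 0 := by
    simpa [hZ, hW, sub_eq_zero, hne] using hprod
  exact hne (by simpa [hω, hW, sub_eq_zero] using hcross)

end SingularSeq

namespace IsZWMatrices

variable {n : ℕ} {m : Fin n → ℂ} {S : SingularSeq n m} {A B : Matrix (Fin n) (Fin n) ℕ}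
  (hAB : IsZWMatrices S A B)
include hAB

lemma swap : IsZWMatrices S.swap B A :=
  ⟨hAB.zeroOne_B, hAB.symm_B, hAB.zeroOne_A, hAB.symm_A, hAB.diag_B, hAB.off_B, hAB.diag_A,
    hAB.off_A⟩

lemma eq_one_iff_zLim_ne_zero (i : Fin n) : A i i = 1 ↔ S.zLim i ≠ 0 :=
  (hAB.diag_A i).trans <| not_congr
    ⟨tendsto_nhds_unique (S.tendsto_zLim i), fun h => h ▸ S.tendsto_zLim i⟩

lemma eq_one_iff_ZLim_ne_zero {i j : Fin n} (hij : i ≠ j) : A i j = 1 ↔ S.ZLim i j ≠ 0 :=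
  (hAB.off_A i j hij).trans <| not_congr
    ⟨tendsto_nhds_unique (S.tendsto_ZLim hij), fun h => h ▸ S.tendsto_ZLim hij⟩

lemma sum_mul_zLim_eq_zero {I : Finset (Fin n)} (hI : IsComponent A I) :
    ∑ k ∈ I, m k * S.zLim k = 0 := by
  have hout : ∀ k ∈ I, ∀ l ∈ Iᶜ,
      Tendsto (fun N => (S.eps N : ℂ) ^ 2 * Zq (S.delta N) (S.z N) k l) atTop (𝓝 0) := by
    intro k hk l hl
    have hkl : k ≠ l := by rintro rfl; exact Finset.mem_compl.1 hl hk
    have hA := hI.apply_eq_zero_of_mem_of_notMem hAB.zeroOne_A hAB.symm_A hk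
      (Finset.mem_compl.1 hl)
    have hZ : S.ZLim k l = 0 := not_not.1 fun h => by
      simpa [hA] using (hAB.eq_one_iff_ZLim_ne_zero hkl).2 h
    exact hZ ▸ S.tendsto_ZLim hkl
  have hseq : ∀ N, ∑ k ∈ I, m k * ((S.eps N : ℂ) ^ 2 * S.z N k)
      = ∑ k ∈ I, ∑ l ∈ Iᶜ, m k * m l * ((S.eps N : ℂ) ^ 2 * Zq (S.delta N) (S.z N) k l) := by
    intro N
    simp only [mul_left_comm _ ((S.eps N : ℂ) ^ 2), ← Finset.mul_sum]
    rw [sum_mul_eq_sum_sum_compl_mul_Zq _ _ m (S.delta_symm N) (S.eq_z N)]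
  refine tendsto_nhds_unique
    (tendsto_finsetSum I fun k _ => (S.tendsto_zLim k).const_mul (m k)) ?_
  simpa [hseq] using tendsto_finsetSum I fun k hk => tendsto_finsetSum Iᶜ fun l hl =>
    (hout k hk l hl).const_mul (m k * m l)

lemma sum_diag_ne_one (hm : ∀ i, m i ≠ 0) {I : Finset (Fin n)} (hI : IsComponent A I) :
    ∑ i ∈ I, A i i ≠ 1 := by
  intro hsum
  obtain ⟨i, hi, hAi⟩ := Finset.exists_ne_zero_of_sum_ne_zero (hsum ▸ one_ne_zero)
  have hrest : ∀ j ∈ I, j ≠ i → A j j = 0 := by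
    have hsplit := Finset.add_sum_erase I (fun j => A j j) hi
    have hzero : ∑ j ∈ I.erase i, A j j = 0 := by omega
    exact fun j hj hji => Finset.sum_eq_zero_iff.1 hzero j (Finset.mem_erase.2 ⟨hji, hj⟩)
  have hsingle : ∑ k ∈ I, m k * S.zLim k = m i * S.zLim i :=
    Finset.sum_eq_single_of_mem i hi fun j hj hji => by
      have hζ : S.zLim j = 0 := not_not.1 fun h => by
        simpa [hrest j hj hji] using (hAB.eq_one_iff_zLim_ne_zero j).2 h
      rw [hζ, mul_zero]
  have hζi : S.zLim i ≠ 0 :=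
    (hAB.eq_one_iff_zLim_ne_zero i).1 ((hAB.zeroOne_A i i).resolve_left hAi)
  exact mul_ne_zero (hm i) hζi (hsingle ▸ hAB.sum_mul_zLim_eq_zero hI)

lemma exists_add_ne_two (hm : ∀ I : Finset (Fin n), I.Nonempty → ∑ k ∈ I, m k ≠ 0)
    {I : Finset (Fin n)} (hI : IsComponent A I) (hdiag : ∀ i ∈ I, A i i = 1) :
    ∃ i ∈ I, ∃ j ∈ I, i ≠ j ∧ A i j + B i j ≠ 2 := by
  by_contra! htwo
  obtain ⟨v, hv⟩ := hI
  have hvI : v ∈ I := (hv v).2 .rfl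
  have hconst : ∀ k ∈ I, S.zLim k = S.zLim v := by
    intro k hk
    rcases eq_or_ne k v with rfl | hkv
    · rfl
    obtain ⟨hA, hB⟩ : A k v = 1 ∧ B k v = 1 := by
      have := htwo k hk v hvI hkv
      have := hAB.zeroOne_A k v
      have := hAB.zeroOne_B k v
      omega
    exact S.zLim_eq_of_ZLim_ne_zero hkv ((hAB.eq_one_iff_ZLim_ne_zero hkv).1 hA)
      ((hAB.swap.eq_one_iff_ZLim_ne_zero hkv).1 hB)
  have hζv : S.zLim v ≠ 0 := (hAB.eq_one_iff_zLim_ne_zero v).1 (hdiag v hvI)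
  have hsum : (∑ k ∈ I, m k) * S.zLim v = 0 := by
    rw [Finset.sum_mul, ← hAB.sum_mul_zLim_eq_zero ⟨v, hv⟩]
    exact Finset.sum_congr rfl fun k hk => by rw [hconst k hk]
  exact mul_ne_zero (hm I ⟨v, hvI⟩) hζv hsum

end IsZWMatrices

theorem rule_of_connected_components_general (n : ℕ) (m : Fin n → ℂ)
    (hm : ∀ I : Finset (Fin n), I.Nonempty → ∑ k ∈ I, m k ≠ 0)
    (S : SingularSeq n m) (A B : Matrix (Fin n) (Fin n) ℕ)
    (hAB : IsZWMatrices S A B) :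
    (∀ I : Finset (Fin n), IsComponent A I →
      (∑ i ∈ I, A i i) ≠ 1 ∧
        ((∀ i ∈ I, A i i = 1) → ∃ i ∈ I, ∃ j ∈ I, i ≠ j ∧ A i j + B i j ≠ 2)) ∧
    (∀ I : Finset (Fin n), IsComponent B I →
      (∑ i ∈ I, B i i) ≠ 1 ∧
        ((∀ i ∈ I, B i i = 1) → ∃ i ∈ I, ∃ j ∈ I, i ≠ j ∧ A i j + B i j ≠ 2)) := by
  have hm₁ : ∀ i, m i ≠ 0 := fun i => by simpa using hm {i} (Finset.singleton_nonempty i)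
  refine ⟨fun I hI => ⟨hAB.sum_diag_ne_one hm₁ hI, hAB.exists_add_ne_two hm hI⟩,
    fun I hI => ⟨hAB.swap.sum_diag_ne_one hm₁ hI, fun hdiag => ?_⟩⟩
  obtain ⟨i, hi, j, hj, hij, hne⟩ := hAB.swap.exists_add_ne_two hm hI hdiag
  exact ⟨i, hi, j, hj, hij, by rwa [add_comm]⟩

theorem rule_of_connected_components (n : ℕ) (hn : 2 ≤ n) (m : Fin n → ℂ)
    (hm : ∀ I : Finset (Fin n), I.Nonempty → ∑ k ∈ I, m k ≠ 0)
    (S : SingularSeq n m) (A B : Matrix (Fin n) (Fin n) ℕ)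
    (hAB : IsZWMatrices S A B) :
    (∀ I : Finset (Fin n), IsComponent A I →
      (∑ i ∈ I, A i i) ≠ 1 ∧
        ((∀ i ∈ I, A i i = 1) → ∃ i ∈ I, ∃ j ∈ I, i ≠ j ∧ A i j + B i j ≠ 2)) ∧
    (∀ I : Finset (Fin n), IsComponent B I →
      (∑ i ∈ I, B i i) ≠ 1 ∧
        ((∀ i ∈ I, B i i = 1) → ∃ i ∈ I, ∃ j ∈ I, i ≠ j ∧ A i j + B i j ≠ 2)) :=
  rule_of_connected_components_general n m hm S A B hAB
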